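/- arXiv:1009.5339 — 5 statements merged into one kernel-verified Lean document; each statement's English description precedes it below -/
import Mathlib

section
/- Let F be a field, A a finite-dimensional non-unital associative F-algebra, and V an s-dimensional F-vector space with basis e₁, …, e_s. Let θ(a,b) = Σᵢ θᵢ(a,b)eᵢ and η(a,b) = Σᵢ ηᵢ(a,b)eᵢ be cocycles with values in V, where θᵢ, ηᵢ are scalar-valued cocycles, and suppose θ^⊥ ∩ C(A) = η^⊥ ∩ C(A) = 0. Then A_θ ≅ A_η as F-algebras if and only if there exists an F-algebra automorphism φ of A such that the classes of the cocycles (a,b) ↦ ηᵢ(φ(a), φ(b)), i = 1,…,s, span the same subspace of H²(A,F) = Z²(A,F)/B²(A,F) as the classes of θ₁, …, θ_s. -/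
/-- The product on `A ⊕ V` determined by the multiplication of `A` and a
bilinear map `θ : A × A → V`:  `(a, v) · (b, w) = (ab, θ(a,b))`. -/
def extMul {F A V : Type*} [Field F]
    [NonUnitalRing A] [Module F A] [SMulCommClass F A A] [IsScalarTower F A A]
    [AddCommGroup V] [Module F V]
    (θ : A →ₗ[F] A →ₗ[F] V) (p q : A × V) : A × V :=
  (p.1 * q.1, θ p.1 q.1)

/-- The space `B²(A,F)` of scalar coboundaries: bilinear maps of the form
`(a,b) ↦ ν(ab)` for a linear map `ν : A → F`. -/
def coboundaries (F A : Type*) [Field F]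
    [NonUnitalRing A] [Module F A] [SMulCommClass F A A] [IsScalarTower F A A] :
    Submodule F (A →ₗ[F] A →ₗ[F] F) where
  carrier := {η | ∃ ν : A →ₗ[F] F, ∀ a b : A, η a b = ν (a * b)}
  add_mem' := by
    rintro x y ⟨ν, hν⟩ ⟨ν', hν'⟩
    exact ⟨ν + ν', fun a b => by simp [hν, hν']⟩
  zero_mem' := ⟨0, fun a b => by simp⟩
  smul_mem' := by
    rintro c x ⟨ν, hν⟩
    exact ⟨c • ν, fun a b => by simp [hν]⟩

/-!
An isomorphism `A_θ ≃ A_η` maps `0 × V` into `0 × V`: the image of `(0, v)` annihilates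
everything, so its `A`-component lies in `η^⊥ ∩ C(A) = 0` (and the same holds for the inverse).
Hence the isomorphism has the triangular form `(a, v) ↦ (φ a, ψ v + σ a)` with `φ` an
automorphism of `A` and `ψ` one of `V`, and it respects the products exactly when `φ` is
multiplicative and `η (φ a) (φ b) = ψ (θ a b) + σ (a b)`. Through the functionals `ℓ ∈ V*`
the last condition says that `ℓ ↦ [ℓ ∘ η ∘ (φ × φ)]` and `ℓ ↦ [ℓ ∘ θ]`, as maps `V* → H²(A,F)`,
differ by the automorphism `ψ*` of `V*`. Two linear maps out of a finite-dimensional space differ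
by an automorphism of it iff they have the same range, and these ranges are the spans of the
classes of the components.
-/

namespace LinearMap

variable {K D Q : Type*} [Field K] [AddCommGroup D] [Module K D] [AddCommGroup Q] [Module K Q]

theorem exists_linearEquiv_range_prod_ker (g : D →ₗ[K] Q) :
    ∃ E : D ≃ₗ[K] range g × ker g, ∀ v, ((E v).1 : Q) = g v := by
  obtain ⟨C, hC⟩ := (ker g).exists_isCompl
  refine ⟨equivProdOfSurjectiveOfIsCompl g.rangeRestrict ((ker g).projectionOnto C hC)
    g.range_rangeRestrict (Submodule.range_projectionOnto hC) ?_, fun v => rfl⟩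
  rw [ker_rangeRestrict, Submodule.ker_projectionOnto]
  exact hC

theorem exists_linearEquiv_comp_eq_of_range_eq [FiniteDimensional K D] {f g : D →ₗ[K] Q}
    (h : range f = range g) : ∃ τ : D ≃ₗ[K] D, f ∘ₗ τ = g := by
  obtain ⟨Ef, hEf⟩ := f.exists_linearEquiv_range_prod_ker
  obtain ⟨Eg, hEg⟩ := g.exists_linearEquiv_range_prod_ker
  have hker : Module.finrank K (ker g) = Module.finrank K (ker f) := by
    have hf := f.finrank_range_add_finrank_ker
    have hg := g.finrank_range_add_finrank_ker
    rw [h] at hf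
    omega
  refine ⟨Eg.trans (((LinearEquiv.ofEq _ _ h.symm).prodCongr
    (LinearEquiv.ofFinrankEq _ _ hker)).trans Ef.symm), ext fun v => ?_⟩
  simp [← hEf, hEg]

end LinearMap

theorem Submodule.map_mkQ_eq_map_mkQ_iff {R M : Type*} [Ring R] [AddCommGroup M] [Module R M]
    (P X Y : Submodule R M) : X.map P.mkQ = Y.map P.mkQ ↔ X ⊔ P = Y ⊔ P := by
  constructor
  · intro h
    simpa [Submodule.comap_map_mkQ, sup_comm] using congrArg (Submodule.comap P.mkQ) h
  · intro h
    simpa [Submodule.map_sup] using congrArg (Submodule.map P.mkQ) h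

theorem LinearMap.exists_linearEquiv_sub_mem_iff {K D Q : Type*} [Field K] [AddCommGroup D]
    [Module K D] [AddCommGroup Q] [Module K Q] [FiniteDimensional K D] (f g : D →ₗ[K] Q)
    (P : Submodule K Q) :
    (∃ τ : D ≃ₗ[K] D, ∀ x, g x - f (τ x) ∈ P) ↔ range g ⊔ P = range f ⊔ P := by
  have hmem (τ : D ≃ₗ[K] D) :
      (∀ x, g x - f (τ x) ∈ P) ↔ P.mkQ ∘ₗ g = P.mkQ ∘ₗ f ∘ₗ τ.toLinearMap := by
    simp [LinearMap.ext_iff, Submodule.Quotient.eq]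
  simp_rw [hmem, ← Submodule.map_mkQ_eq_map_mkQ_iff, ← range_comp]
  constructor
  · rintro ⟨τ, hτ⟩
    rw [hτ, ← comp_assoc, range_comp_of_range_eq_top _ τ.range]
  · exact fun h => (exists_linearEquiv_comp_eq_of_range_eq h.symm).imp fun _ => Eq.symm

theorem Module.Dual.exists_dualMap_eq {K V : Type*} [Field K] [AddCommGroup V] [Module K V]
    [FiniteDimensional K V] (τ : Module.Dual K V ≃ₗ[K] Module.Dual K V) :
    ∃ ψ : V ≃ₗ[K] V, ψ.dualMap = τ := by
  refine ⟨(Module.evalEquiv K V).trans (τ.dualMap.trans (Module.evalEquiv K V).symm), ?_⟩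
  ext ℓ v
  simp

namespace LinearEquiv

variable {R M N : Type*} [Ring R] [AddCommGroup M] [Module R M] [AddCommGroup N] [Module R N]

theorem apply_eq_of_fst_apply_inr_eq_zero {E : (M × N) ≃ₗ[R] (M × N)}
    (hE : ∀ v, (E (0, v)).1 = 0) (x : M × N) :
    E x = ((E (x.1, 0)).1, (E (0, x.2)).2 + (E (x.1, 0)).2) := by
  have hx : E x = E (x.1, 0) + E (0, x.2) := by rw [← map_add]; simp
  ext <;> simp [hx, hE, add_comm]

theorem exists_eq_skewProd_of_fst_apply_inr_eq_zero (E : (M × N) ≃ₗ[R] (M × N))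
    (hE : ∀ v, (E (0, v)).1 = 0) (hE' : ∀ v, (E.symm (0, v)).1 = 0) :
    ∃ (φ : M ≃ₗ[R] M) (ψ : N ≃ₗ[R] N) (σ : M →ₗ[R] N), E = φ.skewProd ψ σ := by
  have fst_eq (G : (M × N) ≃ₗ[R] (M × N)) (hG : ∀ v, (G (0, v)).1 = 0) (x : M × N) :
      (G (x.1, 0)).1 = (G x).1 := by
    rw [apply_eq_of_fst_apply_inr_eq_zero hG x]
  have inr_eq (G : (M × N) ≃ₗ[R] (M × N)) (hG : ∀ v, (G (0, v)).1 = 0) (v : N) :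
      (0, (G (0, v)).2) = G (0, v) :=
    Prod.ext (hG v).symm rfl
  let φ : M ≃ₗ[R] M := .ofLinearMap (.fst R M N ∘ₗ E ∘ₗ .inl R M N)
    (.fst R M N ∘ₗ E.symm ∘ₗ .inl R M N)
    (LinearMap.ext fun a => by simp [fst_eq E hE])
    (LinearMap.ext fun a => by simp [fst_eq E.symm hE'])
  let ψ : N ≃ₗ[R] N := .ofLinearMap (.snd R M N ∘ₗ E ∘ₗ .inr R M N)
    (.snd R M N ∘ₗ E.symm ∘ₗ .inr R M N)
    (LinearMap.ext fun w => by simp [inr_eq E.symm hE'])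
    (LinearMap.ext fun w => by simp [inr_eq E hE])
  exact ⟨φ, ψ, .snd R M N ∘ₗ E.toLinearMap ∘ₗ .inl R M N,
    LinearEquiv.ext (apply_eq_of_fst_apply_inr_eq_zero hE)⟩

end LinearEquiv

namespace LinearMap

variable {R M N V : Type*} [CommRing R] [AddCommGroup M] [Module R M] [AddCommGroup N]
  [Module R N] [AddCommGroup V] [Module R V]

noncomputable def dualCompr₂ (θ : M →ₗ[R] N →ₗ[R] V) :
    Module.Dual R V →ₗ[R] M →ₗ[R] N →ₗ[R] R :=
  lcomp R (N →ₗ[R] R) θ ∘ₗ llcomp R N V R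

@[simp]
theorem dualCompr₂_apply (θ : M →ₗ[R] N →ₗ[R] V) (ℓ : Module.Dual R V) :
    dualCompr₂ θ ℓ = θ.compr₂ ℓ :=
  rfl

theorem range_dualCompr₂ {ι : Type*} [Finite ι] (e : Module.Basis ι R V)
    (θ : M →ₗ[R] N →ₗ[R] V) :
    range (dualCompr₂ θ) = Submodule.span R (Set.range fun i => θ.compr₂ (e.coord i)) := by
  classical
  rw [range_eq_map, ← e.dualBasis.span_eq, Submodule.map_span, ← Set.range_comp,
    e.coe_dualBasis]
  rfl

end LinearMap

theorem Module.Basis.coord_compr₂_eq {R M N V ι : Type*} [CommRing R] [AddCommGroup M]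
    [Module R M] [AddCommGroup N] [Module R N] [AddCommGroup V] [Module R V] [Fintype ι]
    (e : Module.Basis ι R V) {θ : M →ₗ[R] N →ₗ[R] V} {θc : ι → M →ₗ[R] N →ₗ[R] R}
    (h : ∀ a b, θ a b = ∑ i, θc i a b • e i) :
    (fun i => θ.compr₂ (e.coord i)) = θc := by
  classical
  ext i a b
  simp [h, Finsupp.single_apply]

section Cohomology

variable {F A V : Type*} [Field F]
    [NonUnitalRing A] [Module F A] [SMulCommClass F A A] [IsScalarTower F A A]
    [AddCommGroup V] [Module F V] [FiniteDimensional F V]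

theorem exists_eq_comp_mul_iff (ζ : A →ₗ[F] A →ₗ[F] V) :
    (∃ σ : A →ₗ[F] V, ∀ a b, ζ a b = σ (a * b)) ↔
      ∀ ℓ : Module.Dual F V, ζ.compr₂ ℓ ∈ coboundaries F A := by
  constructor
  · rintro ⟨σ, hσ⟩ ℓ
    exact ⟨ℓ ∘ₗ σ, fun a b => by simp [hσ]⟩
  · intro h
    let b := Module.finBasis F V
    choose ν hν using fun i => h (b.coord i)
    refine ⟨∑ i, (ν i).smulRight (b i), fun x y => ?_⟩
    rw [← b.sum_repr (ζ x y)]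
    simp [← hν, Module.Basis.coord_apply]

theorem exists_linearEquiv_add_coboundary_iff (θ ζ : A →ₗ[F] A →ₗ[F] V) :
    (∃ (ψ : V ≃ₗ[F] V) (σ : A →ₗ[F] V), ∀ a b, ζ a b = ψ (θ a b) + σ (a * b)) ↔
      LinearMap.range (LinearMap.dualCompr₂ ζ) ⊔ coboundaries F A =
        LinearMap.range (LinearMap.dualCompr₂ θ) ⊔ coboundaries F A := by
  calc (∃ (ψ : V ≃ₗ[F] V) (σ : A →ₗ[F] V), ∀ a b, ζ a b = ψ (θ a b) + σ (a * b))
      ↔ ∃ ψ : V ≃ₗ[F] V, ∀ ℓ, LinearMap.dualCompr₂ ζ ℓ -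
          LinearMap.dualCompr₂ θ (ψ.dualMap ℓ) ∈ coboundaries F A := by
        refine exists_congr fun ψ => ?_
        have hdiff (ℓ : Module.Dual F V) : (ζ - θ.compr₂ ψ.toLinearMap).compr₂ ℓ =
            LinearMap.dualCompr₂ ζ ℓ - LinearMap.dualCompr₂ θ (ψ.dualMap ℓ) := by
          ext a b
          simp
        simp_rw [← hdiff, ← exists_eq_comp_mul_iff]
        simp [sub_eq_iff_eq_add']
    _ ↔ ∃ τ : Module.Dual F V ≃ₗ[F] Module.Dual F V, ∀ ℓ, LinearMap.dualCompr₂ ζ ℓ -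
          LinearMap.dualCompr₂ θ (τ ℓ) ∈ coboundaries F A := by
        refine ⟨fun ⟨ψ, h⟩ => ⟨ψ.dualMap, h⟩, fun ⟨τ, h⟩ => ?_⟩
        obtain ⟨ψ, rfl⟩ := Module.Dual.exists_dualMap_eq τ
        exact ⟨ψ, h⟩
    _ ↔ _ :=
        -- naming `Q` makes its additive structure come from `AddCommGroup`, as the quotient needs
        LinearMap.exists_linearEquiv_sub_mem_iff (Q := A →ₗ[F] A →ₗ[F] F) _ _ (coboundaries F A)

end Cohomology

section Extension

variable {F A V : Type*} [Field F]
    [NonUnitalRing A] [Module F A] [SMulCommClass F A A] [IsScalarTower F A A]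
    [AddCommGroup V] [Module F V]

theorem fst_apply_inr_eq_zero_of_extMul {θ η : A →ₗ[F] A →ₗ[F] V} (E : (A × V) ≃ₗ[F] (A × V))
    (hE : ∀ p q, E (extMul θ p q) = extMul η (E p) (E q))
    (hη : {a : A | (∀ b : A, η a b = 0 ∧ η b a = 0) ∧ ∀ x : A, a * x = 0 ∧ x * a = 0}
      = ({0} : Set A)) (v : V) :
    (E (0, v)).1 = 0 := by
  have hl : ∀ q, extMul η (E (0, v)) q = 0 := fun q => by
    simpa [extMul, Prod.mk_zero_zero] using (hE (0, v) (E.symm q)).symm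
  have hr : ∀ q, extMul η q (E (0, v)) = 0 := fun q => by
    simpa [extMul, Prod.mk_zero_zero] using (hE (E.symm q) (0, v)).symm
  have hmem : (E (0, v)).1 ∈
      {a : A | (∀ b : A, η a b = 0 ∧ η b a = 0) ∧ ∀ x : A, a * x = 0 ∧ x * a = 0} :=
    ⟨fun b => ⟨congrArg Prod.snd (hl (b, 0)), congrArg Prod.snd (hr (b, 0))⟩,
      fun x => ⟨congrArg Prod.fst (hl (x, 0)), congrArg Prod.fst (hr (x, 0))⟩⟩
  simpa [hη] using hmem

theorem extMul_skewProd_iff (θ η : A →ₗ[F] A →ₗ[F] V) (φ : A ≃ₗ[F] A) (ψ : V ≃ₗ[F] V)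
    (σ : A →ₗ[F] V) :
    (∀ p q, φ.skewProd ψ σ (extMul θ p q) = extMul η (φ.skewProd ψ σ p) (φ.skewProd ψ σ q)) ↔
      (∀ x y, φ (x * y) = φ x * φ y) ∧ ∀ a b, η (φ a) (φ b) = ψ (θ a b) + σ (a * b) := by
  simp only [LinearEquiv.skewProd_apply, extMul, Prod.ext_iff, Prod.forall]
  constructor
  · intro h
    exact ⟨fun x y => (h x 0 y 0).1, fun a b => (h a 0 b 0).2.symm⟩
  · rintro ⟨hφ, hψ⟩ a _ b _
    exact ⟨hφ a b, (hψ a b).symm⟩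

theorem exists_extMul_equiv_iff {θ η : A →ₗ[F] A →ₗ[F] V}
    (hθ : {a : A | (∀ b : A, θ a b = 0 ∧ θ b a = 0) ∧ ∀ x : A, a * x = 0 ∧ x * a = 0}
      = ({0} : Set A))
    (hη : {a : A | (∀ b : A, η a b = 0 ∧ η b a = 0) ∧ ∀ x : A, a * x = 0 ∧ x * a = 0}
      = ({0} : Set A)) :
    (∃ E : (A × V) ≃ₗ[F] (A × V), ∀ p q, E (extMul θ p q) = extMul η (E p) (E q)) ↔
      ∃ φ : A ≃ₗ[F] A, (∀ x y, φ (x * y) = φ x * φ y) ∧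
        ∃ (ψ : V ≃ₗ[F] V) (σ : A →ₗ[F] V), ∀ a b, η (φ a) (φ b) = ψ (θ a b) + σ (a * b) := by
  constructor
  · rintro ⟨E, hE⟩
    have hE' (p q : A × V) : E.symm (extMul η p q) = extMul θ (E.symm p) (E.symm q) :=
      E.injective (by simp [hE])
    obtain ⟨φ, ψ, σ, rfl⟩ := E.exists_eq_skewProd_of_fst_apply_inr_eq_zero
      (fst_apply_inr_eq_zero_of_extMul E hE hη) (fst_apply_inr_eq_zero_of_extMul E.symm hE' hθ)
    obtain ⟨hφ, hψ⟩ := (extMul_skewProd_iff θ η φ ψ σ).1 hE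
    exact ⟨φ, hφ, ψ, σ, hψ⟩
  · rintro ⟨φ, hφ, ψ, σ, hψ⟩
    exact ⟨φ.skewProd ψ σ, (extMul_skewProd_iff θ η φ ψ σ).2 ⟨hφ, hψ⟩⟩

end Extension

theorem stmt5_general {F A V : Type*} [Field F]
    [NonUnitalRing A] [Module F A] [SMulCommClass F A A] [IsScalarTower F A A]
    [AddCommGroup V] [Module F V] {s : ℕ} (e : Module.Basis (Fin s) F V)
    (θ η : A →ₗ[F] A →ₗ[F] V)
    (θc ηc : Fin s → (A →ₗ[F] A →ₗ[F] F))
    (hθe : ∀ a b : A, θ a b = ∑ i, θc i a b • e i)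
    (hηe : ∀ a b : A, η a b = ∑ i, ηc i a b • e i)
    (hθrad : {a : A | (∀ b : A, θ a b = 0 ∧ θ b a = 0) ∧ ∀ x : A, a * x = 0 ∧ x * a = 0}
      = ({0} : Set A))
    (hηrad : {a : A | (∀ b : A, η a b = 0 ∧ η b a = 0) ∧ ∀ x : A, a * x = 0 ∧ x * a = 0}
      = ({0} : Set A)) :
    (∃ e' : (A × V) ≃ₗ[F] (A × V),
        ∀ p q : A × V, e' (extMul θ p q) = extMul η (e' p) (e' q)) ↔
      ∃ φ : A ≃ₗ[F] A, (∀ x y : A, φ (x * y) = φ x * φ y) ∧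
        Submodule.span F
            (Set.range fun i => ((ηc i).comp φ.toLinearMap).compl₂ φ.toLinearMap)
          ⊔ coboundaries F A
        = Submodule.span F (Set.range θc) ⊔ coboundaries F A := by
  have : FiniteDimensional F V := Module.Finite.of_basis e
  rw [exists_extMul_equiv_iff hθrad hηrad]
  refine exists_congr fun φ => and_congr_right fun _ => ?_
  have hηφ := e.coord_compr₂_eq (θ := η.compl₁₂ φ.toLinearMap φ.toLinearMap)
    (θc := fun i => ((ηc i).comp φ.toLinearMap).compl₂ φ.toLinearMap) fun a b => hηe (φ a) (φ b)
  rw [← e.coord_compr₂_eq hθe, ← hηφ, ← LinearMap.range_dualCompr₂ e,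
    ← LinearMap.range_dualCompr₂ e]
  exact exists_linearEquiv_add_coboundary_iff θ (η.compl₁₂ φ.toLinearMap φ.toLinearMap)

/-- Skjelbred–Sund isomorphism criterion.  Let `θ(a,b) = Σᵢ θᵢ(a,b)eᵢ` and
`η(a,b) = Σᵢ ηᵢ(a,b)eᵢ` be cocycles (with `θᵢ, ηᵢ` scalar cocycles and `e` a basis of `V`)
such that `θ^⊥ ∩ C(A) = 0` and `η^⊥ ∩ C(A) = 0`.  Then `A_θ ≅ A_η` as `F`-algebras iff
there is an algebra automorphism `φ` of `A` such that the classes of the cocycles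
`(a,b) ↦ ηᵢ(φ a, φ b)` span the same subspace of `H²(A,F) = Z²(A,F)/B²(A,F)` as the
classes of `θ₁, …, θ_s` (equivalently, the corresponding spans in `Z²(A,F)` agree
modulo `B²(A,F)`). -/
theorem stmt5 {F A V : Type*} [Field F]
    [NonUnitalRing A] [Module F A] [SMulCommClass F A A] [IsScalarTower F A A]
    [FiniteDimensional F A]
    [AddCommGroup V] [Module F V] {s : ℕ} (e : Module.Basis (Fin s) F V)
    (θ η : A →ₗ[F] A →ₗ[F] V)
    (hθ : ∀ a b c : A, θ (a * b) c = θ a (b * c))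
    (hη : ∀ a b c : A, η (a * b) c = η a (b * c))
    (θc ηc : Fin s → (A →ₗ[F] A →ₗ[F] F))
    (hθc : ∀ i, ∀ a b c : A, θc i (a * b) c = θc i a (b * c))
    (hηc : ∀ i, ∀ a b c : A, ηc i (a * b) c = ηc i a (b * c))
    (hθe : ∀ a b : A, θ a b = ∑ i, θc i a b • e i)
    (hηe : ∀ a b : A, η a b = ∑ i, ηc i a b • e i)
    (hθrad : {a : A | (∀ b : A, θ a b = 0 ∧ θ b a = 0) ∧ ∀ x : A, a * x = 0 ∧ x * a = 0}
      = ({0} : Set A))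
    (hηrad : {a : A | (∀ b : A, η a b = 0 ∧ η b a = 0) ∧ ∀ x : A, a * x = 0 ∧ x * a = 0}
      = ({0} : Set A)) :
    (∃ e' : (A × V) ≃ₗ[F] (A × V),
        ∀ p q : A × V, e' (extMul θ p q) = extMul η (e' p) (e' q)) ↔
      ∃ φ : A ≃ₗ[F] A, (∀ x y : A, φ (x * y) = φ x * φ y) ∧
        Submodule.span F
            (Set.range fun i => ((ηc i).comp φ.toLinearMap).compl₂ φ.toLinearMap)
          ⊔ coboundaries F A
        = Submodule.span F (Set.range θc) ⊔ coboundaries F A :=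
  stmt5_general e θ η θc ηc hθe hηe hθrad hηrad
end

section
/- Let F be a field, A a non-unital associative F-algebra, V an s-dimensional F-vector space with basis e₁, …, e_s, and θ(a,b) = Σᵢ θᵢ(a,b)eᵢ a cocycle with θ^⊥ ∩ C(A) = 0, where each θᵢ is a scalar-valued cocycle. Then the central extension A_θ has no central component if and only if the images of θ₁, …, θ_s in H²(A,F) are linearly independent. -/
lemma LinearMap.compr₂_constr {R M V ι : Type*} [CommSemiring R] [AddCommMonoid M] [Module R M]
    [AddCommMonoid V] [Module R V] [Fintype ι] (θ : M →ₗ[R] M →ₗ[R] V) (e : Module.Basis ι R V)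
    (θc : ι → M →ₗ[R] M →ₗ[R] R) (hθe : ∀ a b : M, θ a b = ∑ i, θc i a b • e i) (c : ι → R) :
    θ.compr₂ (e.constr R c) = ∑ i, c i • θc i := by
  ext a b
  simp only [compr₂_apply, hθe, map_sum, map_smul, Module.Basis.constr_basis, smul_eq_mul,
    LinearMap.sum_apply, LinearMap.smul_apply, mul_comm]

open LinearMap Submodule

section CentralComponent

variable {F A V : Type*} [Field F]
  [NonUnitalRing A] [Module F A] [SMulCommClass F A A] [IsScalarTower F A A]
  [AddCommGroup V] [Module F V] (θ : A →ₗ[F] A →ₗ[F] V)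

def HasCentralComponent : Prop :=
  ∃ I₁ I₂ : Submodule F (A × V),
    (∀ p ∈ I₁, ∀ q : A × V, extMul θ p q ∈ I₁ ∧ extMul θ q p ∈ I₁) ∧
    (∀ p ∈ I₂, ∀ q : A × V, extMul θ p q ∈ I₂ ∧ extMul θ q p ∈ I₂) ∧
    I₂ ≠ ⊥ ∧
    (∀ p ∈ I₂, ∀ q : A × V, extMul θ p q = 0 ∧ extMul θ q p = 0) ∧
    IsCompl I₁ I₂

/-- `θ^⊥ ∩ C(A)`. -/
def perpMulKernel : Set A :=
  {a : A | (∀ b : A, θ a b = 0 ∧ θ b a = 0) ∧ ∀ x : A, a * x = 0 ∧ x * a = 0}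

lemma extMul_congr {p p' q q' : A × V} (hp : p.1 = p'.1) (hq : q.1 = q'.1) :
    extMul θ p q = extMul θ p' q' := by
  rw [extMul, extMul, hp, hq]

lemma extMul_eq_zero_of_fst_eq_zero_left {p : A × V} (hp : p.1 = 0) (q : A × V) :
    extMul θ p q = 0 := by
  simp [extMul, hp]

lemma extMul_eq_zero_of_fst_eq_zero_right {q : A × V} (hq : q.1 = 0) (p : A × V) :
    extMul θ p q = 0 := by
  simp [extMul, hq]

lemma extMul_mem_of_codisjoint {I₁ I₂ : Submodule F (A × V)}
    (hI₁ : ∀ p ∈ I₁, ∀ q : A × V, extMul θ p q ∈ I₁) (hI₂ : ∀ p ∈ I₂, p.1 = 0)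
    (h : Codisjoint I₁ I₂) (p q : A × V) : extMul θ p q ∈ I₁ := by
  obtain ⟨y, hy, z, hz, rfl⟩ := mem_sup.mp (h.eq_top ▸ mem_top : p ∈ I₁ ⊔ I₂)
  rw [extMul_congr θ (p' := y) (by simp [hI₂ z hz]) rfl]
  exact hI₁ y hy q

lemma fst_eq_zero_of_forall_extMul_eq_zero (hrad : perpMulKernel θ ⊆ {0})
    {p : A × V} (hp : ∀ q : A × V, extMul θ p q = 0 ∧ extMul θ q p = 0) : p.1 = 0 :=
  hrad ⟨fun b => ⟨congrArg Prod.snd (hp (b, 0)).1, congrArg Prod.snd (hp (b, 0)).2⟩,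
    fun x => ⟨congrArg Prod.fst (hp (x, 0)).1, congrArg Prod.fst (hp (x, 0)).2⟩⟩

lemma compr₂_inr_mem_coboundaries (ψ : Module.Dual F (A × V))
    (hψ : ∀ p q : A × V, ψ (extMul θ p q) = 0) :
    θ.compr₂ (ψ ∘ₗ inr F A V) ∈ coboundaries F A := by
  refine ⟨-(ψ ∘ₗ inl F A V), fun a b => ?_⟩
  have hsplit : ψ (extMul θ (a, 0) (b, 0)) = ψ (a * b, 0) + ψ (0, θ a b) := by
    rw [← map_add, Prod.mk_add_mk, add_zero, zero_add]; rfl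
  have := hψ (a, 0) (b, 0)
  change ψ (0, θ a b) = -ψ (a * b, 0)
  linear_combination this - hsplit

lemma hasCentralComponent_of_compr₂_mem_coboundaries {φ : Module.Dual F V} (hφ : φ ≠ 0)
    (hcob : θ.compr₂ φ ∈ coboundaries F A) : HasCentralComponent θ := by
  obtain ⟨ν, hν⟩ := hcob
  obtain ⟨v, hv⟩ := DFunLike.ne_iff.mp hφ
  set L : Module.Dual F (A × V) := φ ∘ₗ snd F A V - ν ∘ₗ fst F A V
  have hL : ∀ p q : A × V, L (extMul θ p q) = 0 := fun p q => sub_eq_zero.mpr (hν p.1 q.1)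
  have hLv : L (0, v) ≠ 0 := by simpa [L] using hv
  have hcentral : ∀ p ∈ F ∙ ((0, v) : A × V), ∀ q : A × V,
      extMul θ p q = 0 ∧ extMul θ q p = 0 := by
    intro p hp q
    obtain ⟨t, rfl⟩ := mem_span_singleton.mp hp
    exact ⟨extMul_eq_zero_of_fst_eq_zero_left θ (by simp) q,
      extMul_eq_zero_of_fst_eq_zero_right θ (by simp) q⟩
  refine ⟨ker L, F ∙ (0, v), fun p _ q => ⟨hL p q, hL q p⟩, fun p hp q => ?_, ?_, hcentral, ?_⟩
  · rw [(hcentral p hp q).1, (hcentral p hp q).2]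
    exact ⟨zero_mem _, zero_mem _⟩
  · rw [Ne, span_singleton_eq_bot]
    intro h
    exact hLv (by rw [h, map_zero])
  · have hL0 : L ≠ 0 := fun h => hLv (by simp [h])
    exact isCompl_span_singleton_of_isCoatom_of_notMem
      (isCoatom_ker_of_surjective (surjective_of_ne_zero hL0)) hLv

lemma exists_compr₂_mem_coboundaries_of_hasCentralComponent
    (hrad : perpMulKernel θ ⊆ {0}) (h : HasCentralComponent θ) :
    ∃ φ : Module.Dual F V, φ ≠ 0 ∧ θ.compr₂ φ ∈ coboundaries F A := by
  obtain ⟨I₁, I₂, hI₁, -, hne, hcentral, hcompl⟩ := h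
  have hfst : ∀ p ∈ I₂, p.1 = 0 := fun p hp =>
    fst_eq_zero_of_forall_extMul_eq_zero θ hrad (hcentral p hp)
  obtain ⟨w, hw, hw0⟩ := exists_mem_ne_zero_of_ne_bot hne
  have hwI₁ : w ∉ I₁ := fun h => hw0 (disjoint_def.mp hcompl.disjoint w h hw)
  obtain ⟨ψ, hψw, hψI₁⟩ := exists_le_ker_of_notMem hwI₁
  refine ⟨ψ ∘ₗ inr F A V, fun h0 => hψw ?_, compr₂_inr_mem_coboundaries θ ψ fun p q =>
    hψI₁ (extMul_mem_of_codisjoint θ (fun p hp q => (hI₁ p hp q).1) hfst hcompl.codisjoint p q)⟩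
  rw [show w = (0, w.2) from Prod.ext (hfst w hw) rfl]
  exact LinearMap.congr_fun h0 w.2

theorem not_hasCentralComponent_iff (hrad : perpMulKernel θ ⊆ {0}) :
    ¬ HasCentralComponent θ ↔ ∀ φ : Module.Dual F V, θ.compr₂ φ ∈ coboundaries F A → φ = 0 := by
  constructor
  · intro h φ hφ
    by_contra hne
    exact h (hasCentralComponent_of_compr₂_mem_coboundaries θ hne hφ)
  · intro h hcc
    obtain ⟨φ, hne, hφ⟩ := exists_compr₂_mem_coboundaries_of_hasCentralComponent θ hrad hcc
    exact hne (h φ hφ)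

lemma forall_sum_smul_mem_coboundaries_iff {ι : Type*} [Fintype ι] (e : Module.Basis ι F V)
    (θc : ι → A →ₗ[F] A →ₗ[F] F) (hθe : ∀ a b : A, θ a b = ∑ i, θc i a b • e i) :
    (∀ c : ι → F, (∑ i, c i • θc i) ∈ coboundaries F A → c = 0) ↔
      ∀ φ : Module.Dual F V, θ.compr₂ φ ∈ coboundaries F A → φ = 0 := by
  constructor
  · intro h φ hφ
    rw [← (e.constr F).apply_symm_apply φ, θ.compr₂_constr e θc hθe] at hφ
    simpa using h _ hφ
  · intro h c hc
    rw [← θ.compr₂_constr e θc hθe] at hc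
    exact (e.constr F).map_eq_zero_iff.mp (h _ hc)

end CentralComponent

theorem stmt6_general {F A V : Type*} [Field F]
    [NonUnitalRing A] [Module F A] [SMulCommClass F A A] [IsScalarTower F A A]
    [AddCommGroup V] [Module F V] {s : ℕ} (e : Module.Basis (Fin s) F V)
    (θ : A →ₗ[F] A →ₗ[F] V)
    (θc : Fin s → (A →ₗ[F] A →ₗ[F] F))
    (hθe : ∀ a b : A, θ a b = ∑ i, θc i a b • e i)
    (hθrad : {a : A | (∀ b : A, θ a b = 0 ∧ θ b a = 0) ∧ ∀ x : A, a * x = 0 ∧ x * a = 0}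
      = ({0} : Set A)) :
    (¬ ∃ I₁ I₂ : Submodule F (A × V),
        (∀ p ∈ I₁, ∀ q : A × V, extMul θ p q ∈ I₁ ∧ extMul θ q p ∈ I₁) ∧
        (∀ p ∈ I₂, ∀ q : A × V, extMul θ p q ∈ I₂ ∧ extMul θ q p ∈ I₂) ∧
        I₂ ≠ ⊥ ∧
        (∀ p ∈ I₂, ∀ q : A × V, extMul θ p q = 0 ∧ extMul θ q p = 0) ∧
        IsCompl I₁ I₂) ↔
      ∀ c : Fin s → F, (∑ i, c i • θc i) ∈ coboundaries F A → c = 0 := by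
  rw [forall_sum_smul_mem_coboundaries_iff θ e θc hθe]
  exact not_hasCentralComponent_iff θ hθrad.le

/-- Let `θ(a,b) = Σᵢ θᵢ(a,b)eᵢ` be a cocycle with `θ^⊥ ∩ C(A) = 0`, where the `θᵢ` are
scalar cocycles and `e` is a basis of `V`.  Then the central extension `A_θ` has no
central component (i.e. there is no decomposition `A_θ = I₁ ⊕ I₂` into ideals with
`I₂ ≠ 0` contained in the multiplication kernel) if and only if the images of
`θ₁, …, θ_s` in `H²(A,F) = Z²(A,F)/B²(A,F)` are linearly independent. -/
theorem stmt6 {F A V : Type*} [Field F]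
    [NonUnitalRing A] [Module F A] [SMulCommClass F A A] [IsScalarTower F A A]
    [AddCommGroup V] [Module F V] {s : ℕ} (e : Module.Basis (Fin s) F V)
    (θ : A →ₗ[F] A →ₗ[F] V)
    (hθ : ∀ a b c : A, θ (a * b) c = θ a (b * c))
    (θc : Fin s → (A →ₗ[F] A →ₗ[F] F))
    (hθc : ∀ i, ∀ a b c : A, θc i (a * b) c = θc i a (b * c))
    (hθe : ∀ a b : A, θ a b = ∑ i, θc i a b • e i)
    (hθrad : {a : A | (∀ b : A, θ a b = 0 ∧ θ b a = 0) ∧ ∀ x : A, a * x = 0 ∧ x * a = 0}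
      = ({0} : Set A)) :
    (¬ ∃ I₁ I₂ : Submodule F (A × V),
        (∀ p ∈ I₁, ∀ q : A × V, extMul θ p q ∈ I₁ ∧ extMul θ q p ∈ I₁) ∧
        (∀ p ∈ I₂, ∀ q : A × V, extMul θ p q ∈ I₂ ∧ extMul θ q p ∈ I₂) ∧
        I₂ ≠ ⊥ ∧
        (∀ p ∈ I₂, ∀ q : A × V, extMul θ p q = 0 ∧ extMul θ q p = 0) ∧
        IsCompl I₁ I₂) ↔
      ∀ c : Fin s → F, (∑ i, c i • θc i) ∈ coboundaries F A → c = 0 :=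
  stmt6_general e θ θc hθe hθrad
end

section
/- Let F be a field. Every 2-dimensional nilpotent non-unital associative F-algebra is isomorphic to exactly one of: (i) the 2-dimensional algebra with identically zero multiplication, or (ii) the algebra with basis a, b and multiplication determined by a² = b (all other products of basis elements zero). These two algebras are not isomorphic. -/
/-- A (non-unital) algebra is nilpotent if there is `n ≥ 1` such that every product of
`n` elements is zero. -/
def AlgNilpotent (A : Type*) [Mul A] [Zero A] : Prop :=
  ∃ n : ℕ, 0 < n ∧ ∀ (x : A) (l : List A), l.length + 1 = n → l.foldl (· * ·) x = 0

/-- The multiplication table `a² = b` (all other products of the basis elements zero). -/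
def IsA22Basis {F A : Type*} [Field F] [NonUnitalRing A] [Module F A]
    (v : Module.Basis (Fin 2) F A) : Prop :=
  v 0 * v 0 = v 1 ∧ v 0 * v 1 = 0 ∧ v 1 * v 0 = 0 ∧ v 1 * v 1 = 0

/-! If every square vanishes, then for independent `x, y` write `x * y = γ • x + δ • y`;
multiplying by `x` on the left and by `y` on the right gives `δ • (x * y) = γ • (x * y) = 0`,
so all products vanish. Otherwise take `a` with `a * a ≠ 0`. Nilpotency makes right multiplication
`R` by `a` kill `a` after finitely many steps; were `a * a = c • a`, `a` would be an eigenvector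
of `R` and `c` would be nilpotent, hence zero. So `a, a * a` is a basis, `R` is nilpotent on it,
and a nilpotent endomorphism of a plane squares to zero: `a * a * a = 0`. -/

open Module

lemma Module.End.pow_finrank_eq_zero_of_isNilpotent {K V : Type*} [Field K] [AddCommGroup V]
    [Module K V] [FiniteDimensional K V] {φ : End K V} (hφ : IsNilpotent φ) :
    φ ^ finrank K V = 0 := by
  simpa [hφ.charpoly_eq_X_pow_finrank] using φ.aeval_self_charpoly

lemma exists_smul_add_smul_eq_of_finrank_eq_two {K V : Type*} [DivisionRing K] [AddCommGroup V]
    [Module K V] (hV : finrank K V = 2) {x y : V} (hxy : LinearIndependent K ![x, y]) (z : V) :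
    ∃ γ δ : K, γ • x + δ • y = z := by
  have hspan := hxy.span_eq_top_of_card_eq_finrank (by simp [hV])
  rw [Matrix.range_cons, Matrix.range_cons, Matrix.range_empty, Set.union_empty,
    Set.singleton_union] at hspan
  exact Submodule.mem_span_pair.mp (hspan ▸ Submodule.mem_top)

section

variable {F A : Type*} [Field F] [NonUnitalRing A] [Module F A]

lemma linearIndependent_pair_of_mul_self_eq_zero [SMulCommClass F A A] {x y : A}
    (hxx : x * x = 0) (hxy : x * y ≠ 0) : LinearIndependent F ![x, y] := by
  have hx : x ≠ 0 := by rintro rfl; simp at hxy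
  refine (LinearIndependent.pair_iff' hx).mpr fun c hc => hxy ?_
  rw [← hc, mul_smul_comm, hxx, smul_zero]

lemma mul_eq_zero_of_forall_mul_self_eq_zero [SMulCommClass F A A] [IsScalarTower F A A]
    (hA : finrank F A = 2) (hsq : ∀ a : A, a * a = 0) (x y : A) : x * y = 0 := by
  by_contra hxy
  obtain ⟨γ, δ, hγδ⟩ := exists_smul_add_smul_eq_of_finrank_eq_two hA
    (linearIndependent_pair_of_mul_self_eq_zero (F := F) (hsq x) hxy) (x * y)
  have hδ : δ • (x * y) = 0 := calc
    δ • (x * y) = x * (γ • x + δ • y) := by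
      rw [mul_add, mul_smul_comm, mul_smul_comm, hsq, smul_zero, zero_add]
    _ = 0 := by rw [hγδ, ← mul_assoc, hsq, zero_mul]
  have hγ : γ • (x * y) = 0 := calc
    γ • (x * y) = (γ • x + δ • y) * y := by
      rw [add_mul, smul_mul_assoc, smul_mul_assoc, hsq, smul_zero, add_zero]
    _ = 0 := by rw [hγδ, mul_assoc, hsq, mul_zero]
  have hγ0 : γ = 0 := (smul_eq_zero.mp hγ).resolve_right hxy
  have hδ0 : δ = 0 := (smul_eq_zero.mp hδ).resolve_right hxy
  exact hxy (by simpa [hγ0, hδ0] using hγδ.symm)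

lemma List.foldl_mul_replicate [IsScalarTower F A A] (a x : A) (k : ℕ) :
    (List.replicate k a).foldl (· * ·) x = (LinearMap.mulRight F a ^ k) x := by
  induction k generalizing x with
  | zero => rfl
  | succ k ih =>
    rw [List.replicate_succ, List.foldl_cons, ih, pow_succ, End.mul_apply, LinearMap.mulRight_apply]

lemma AlgNilpotent.exists_mulRight_pow_apply_self_eq_zero [IsScalarTower F A A]
    (hnil : AlgNilpotent A) : ∃ m : ℕ, ∀ a : A, (LinearMap.mulRight F a ^ m) a = 0 := by
  obtain ⟨n, hn, hfold⟩ := hnil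
  refine ⟨n - 1, fun a => ?_⟩
  rw [← List.foldl_mul_replicate]
  exact hfold a _ (by rw [List.length_replicate]; omega)

lemma AlgNilpotent.linearIndependent_self_mul_self [IsScalarTower F A A]
    (hnil : AlgNilpotent A) {a : A} (ha : a * a ≠ 0) : LinearIndependent F ![a, a * a] := by
  have ha0 : a ≠ 0 := by rintro rfl; simp at ha
  obtain ⟨m, hm⟩ := hnil.exists_mulRight_pow_apply_self_eq_zero (F := F)
  refine (LinearIndependent.pair_iff' ha0).mpr fun c hc => ha ?_
  have hev : End.HasEigenvector (LinearMap.mulRight F a) c a :=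
    End.hasEigenvector_iff.mpr ⟨End.mem_eigenspace_iff.mpr hc.symm, ha0⟩
  have hc0 : c = 0 :=
    eq_zero_of_pow_eq_zero ((smul_eq_zero.mp (hev.pow_apply m ▸ hm a)).resolve_right ha0)
  rw [← hc, hc0, zero_smul]

lemma AlgNilpotent.mul_self_mul_eq_zero [IsScalarTower F A A] (hA : finrank F A = 2)
    (hnil : AlgNilpotent A) (a : A) : a * a * a = 0 := by
  by_cases ha : a * a = 0
  · rw [ha, zero_mul]
  let v := basisOfLinearIndependentOfCardEqFinrank
    (hnil.linearIndependent_self_mul_self (F := F) ha) (by simp [hA])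
  have : FiniteDimensional F A := v.finiteDimensional_of_finite
  obtain ⟨m, hm⟩ := hnil.exists_mulRight_pow_apply_self_eq_zero (F := F)
  have hR : IsNilpotent (LinearMap.mulRight F a) := by
    refine ⟨m, v.ext <| Fin.forall_fin_two.mpr ⟨by simpa [v] using hm a, ?_⟩⟩
    simp only [v, coe_basisOfLinearIndependentOfCardEqFinrank, Matrix.cons_val_one,
      Matrix.cons_val_zero, LinearMap.zero_apply]
    rw [← LinearMap.mulRight_apply F a a, ← End.mul_apply, pow_mul_comm', End.mul_apply, hm,
      map_zero]
  simpa [hA, pow_two] using congr($(End.pow_finrank_eq_zero_of_isNilpotent hR) a)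

lemma AlgNilpotent.exists_isA22Basis [IsScalarTower F A A] (hA : finrank F A = 2)
    (hnil : AlgNilpotent A) {a : A} (ha : a * a ≠ 0) :
    ∃ v : Basis (Fin 2) F A, IsA22Basis v := by
  have haaa := hnil.mul_self_mul_eq_zero (F := F) hA a
  refine ⟨basisOfLinearIndependentOfCardEqFinrank
    (hnil.linearIndependent_self_mul_self (F := F) ha) (by simp [hA]), ?_⟩
  simp only [IsA22Basis, coe_basisOfLinearIndependentOfCardEqFinrank]
  refine ⟨rfl, (mul_assoc a a a).symm.trans haaa, haaa, ?_⟩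
  show a * a * (a * a) = 0
  rw [← mul_assoc, haaa, zero_mul]

end

lemma LinearEquiv.mul_eq_zero_of_map_mul {R A A' : Type*} [Semiring R]
    [NonUnitalNonAssocSemiring A] [Module R A] [NonUnitalNonAssocSemiring A'] [Module R A']
    (e : A ≃ₗ[R] A') (he : ∀ x y : A, e (x * y) = e x * e y) (hzero : ∀ x y : A, x * y = 0)
    (x y : A') : x * y = 0 := by
  rw [← e.apply_symm_apply x, ← e.apply_symm_apply y, ← he, hzero, map_zero]

theorem stmt8_general {F A A' : Type*} [Field F]
    [NonUnitalRing A] [Module F A] [SMulCommClass F A A] [IsScalarTower F A A]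
    [NonUnitalRing A'] [Module F A']
    (hA : Module.finrank F A = 2) (hAnil : AlgNilpotent A) :
    (∃ v : Module.Basis (Fin 2) F A, (∀ x y : A, x * y = 0) ∨ IsA22Basis v) ∧
      ((∀ x y : A, x * y = 0) → (∃ w : Module.Basis (Fin 2) F A', IsA22Basis w) →
        ¬ ∃ e : A ≃ₗ[F] A', ∀ x y : A, e (x * y) = e x * e y) := by
  refine ⟨?_, fun hzero ⟨w, hw⟩ ⟨e, he⟩ => w.ne_zero 1 ?_⟩
  · by_cases hzero : ∀ x y : A, x * y = 0
    · have : Module.Finite F A := Module.finite_of_finrank_eq_succ hA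
      exact ⟨Module.finBasisOfFinrankEq F A hA, Or.inl hzero⟩
    obtain ⟨a, ha⟩ : ∃ a : A, a * a ≠ 0 := by
      by_contra! hsq
      exact hzero (mul_eq_zero_of_forall_mul_self_eq_zero hA hsq)
    obtain ⟨v, hv⟩ := hAnil.exists_isA22Basis hA ha
    exact ⟨v, Or.inr hv⟩
  · rw [← hw.1]
    exact e.mul_eq_zero_of_map_mul he hzero _ _

/-- Every 2-dimensional nilpotent non-unital associative algebra over a field `F` is
isomorphic to exactly one of: (i) the algebra with zero multiplication, (ii) the algebra
with basis `a, b` and only nonzero product `a² = b`; and these two are not isomorphic. -/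
theorem stmt8 {F A A' : Type*} [Field F]
    [NonUnitalRing A] [Module F A] [SMulCommClass F A A] [IsScalarTower F A A]
    [NonUnitalRing A'] [Module F A'] [SMulCommClass F A' A'] [IsScalarTower F A' A']
    (hA : Module.finrank F A = 2) (hAnil : AlgNilpotent A)
    (hA' : Module.finrank F A' = 2) (hA'nil : AlgNilpotent A') :
    (∃ v : Module.Basis (Fin 2) F A, (∀ x y : A, x * y = 0) ∨ IsA22Basis v) ∧
      ((∀ x y : A, x * y = 0) → (∃ w : Module.Basis (Fin 2) F A', IsA22Basis w) →
        ¬ ∃ e : A ≃ₗ[F] A', ∀ x y : A, e (x * y) = e x * e y) :=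
  stmt8_general hA hAnil
end

section
/- Let F be a field and for α ∈ F with α ≠ 0 let A_{3,3}^α be the 3-dimensional non-unital associative F-algebra with basis a, b, c and nonzero products a² = αc, b² = c. Then for nonzero α, β ∈ F, the algebras A_{3,3}^α and A_{3,3}^β are isomorphic if and only if there exists ε ∈ F with ε ≠ 0 and α = ε²β. -/
/-- The multiplication table of `A_{3,3}^α` on a basis `a = v 0`, `b = v 1`, `c = v 2`:
`a² = αc`, `b² = c`, and all other products of basis elements zero. -/
def IsA33Basis {F A : Type*} [Field F] [NonUnitalRing A] [Module F A]
    (α : F) (v : Module.Basis (Fin 3) F A) : Prop :=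
  v 0 * v 0 = α • v 2 ∧ v 1 * v 1 = v 2 ∧
  v 0 * v 1 = 0 ∧ v 1 * v 0 = 0 ∧ v 0 * v 2 = 0 ∧ v 2 * v 0 = 0 ∧
  v 1 * v 2 = 0 ∧ v 2 * v 1 = 0 ∧ v 2 * v 2 = 0

/-!
In `A_{3,3}^β` every product is `x * y = φ(x, y) • c`, where `φ` is the symmetric form
`diag(β, 1, 0)` in the coordinates of the basis. An isomorphism `e` from `A_{3,3}^α` sends `c` to
`λ • c` with `λ = φ(q, q) ≠ 0`, where `p = e a`, `q = e b`; applying `e` to `a² = αc` and `ab = 0`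
gives `φ(p, p) = αλ` and `φ(p, q) = 0`. The Lagrange identity
`φ(p, p) φ(q, q) - φ(p, q)² = β (p₀ q₁ - p₁ q₀)²` then yields `αλ² = βd²` with `d ≠ 0`, so
`ε = d / λ` works. Conversely, if `α = ε²β` then `a ↦ ε a`, `b ↦ b`, `c ↦ c` is an isomorphism.
-/

open Module

theorem sq_mul_eq_of_orthogonal {R : Type*} [CommRing R] {α β p₀ p₁ q₀ q₁ : R}
    (hp : α * (q₀ * q₀ * β + q₁ * q₁) = p₀ * p₀ * β + p₁ * p₁)
    (hpq : p₀ * q₀ * β + p₁ * q₁ = 0) :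
    α * (q₀ * q₀ * β + q₁ * q₁) ^ 2 = (p₀ * q₁ - p₁ * q₀) ^ 2 * β := by
  linear_combination (q₀ * q₀ * β + q₁ * q₁) * hp + (p₀ * q₀ * β + p₁ * q₁) * hpq

theorem exists_ne_zero_eq_sq_mul_of_mul_sq_eq {K : Type*} [Field K] {α β d l : K}
    (hα : α ≠ 0) (hl : l ≠ 0) (h : α * l ^ 2 = d ^ 2 * β) :
    ∃ ε : K, ε ≠ 0 ∧ α = ε ^ 2 * β := by
  refine ⟨d / l, div_ne_zero ?_ hl, by field_simp; linear_combination h⟩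
  rintro rfl
  simp_all

namespace IsA33Basis

variable {F A B : Type*} [Field F] [NonUnitalRing A] [Module F A]
  [NonUnitalRing B] [Module F B] [SMulCommClass F B B] [IsScalarTower F B B]
  {α β : F} {v : Basis (Fin 3) F A} {w : Basis (Fin 3) F B}

theorem mul_eq (hw : IsA33Basis β w) (x y : B) :
    x * y = (w.repr x 0 * w.repr y 0 * β + w.repr x 1 * w.repr y 1) • w 2 := by
  obtain ⟨h00, h11, h01, h10, h02, h20, h12, h21, h22⟩ := hw
  conv_lhs => rw [← w.sum_repr x, ← w.sum_repr y]
  simp only [Fin.sum_univ_three, add_mul, mul_add, smul_mul_smul_comm,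
    h00, h11, h01, h10, h02, h20, h12, h21, h22, smul_zero, add_zero, zero_add, smul_smul,
    add_smul]

theorem exists_eq_sq_mul_of_mulEquiv (hα : α ≠ 0) (hv : IsA33Basis α v) (hw : IsA33Basis β w)
    (e : A ≃ₗ[F] B) (he : ∀ x y, e (x * y) = e x * e y) :
    ∃ ε : F, ε ≠ 0 ∧ α = ε ^ 2 * β := by
  set p := w.repr (e (v 0))
  set q := w.repr (e (v 1))
  have hc : e (v 2) = (q 0 * q 0 * β + q 1 * q 1) • w 2 := by
    rw [← hv.2.1, he, hw.mul_eq]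
  have hl : q 0 * q 0 * β + q 1 * q 1 ≠ 0 := by
    intro h
    rw [h, zero_smul, LinearEquiv.map_eq_zero_iff] at hc
    exact v.ne_zero 2 hc
  have hsmul : ∀ {a b : F}, a • w 2 = b • w 2 → a = b := fun h =>
    smul_left_injective F (w.ne_zero 2) h
  have hp : α * (q 0 * q 0 * β + q 1 * q 1) = p 0 * p 0 * β + p 1 * p 1 := by
    apply hsmul
    rw [mul_smul, ← hc, ← map_smul, ← hv.1, he, hw.mul_eq]
  have hpq : p 0 * q 0 * β + p 1 * q 1 = 0 := by
    apply hsmul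
    rw [← hw.mul_eq, ← he, hv.2.2.1, map_zero, zero_smul]
  exact exists_ne_zero_eq_sq_mul_of_mul_sq_eq hα hl (sq_mul_eq_of_orthogonal hp hpq)

theorem exists_mulEquiv_of_eq_sq_mul [SMulCommClass F A A] [IsScalarTower F A A]
    (hv : IsA33Basis α v) (hw : IsA33Basis β w) {ε : F} (hε : ε ≠ 0) (hαβ : α = ε ^ 2 * β) :
    ∃ e : A ≃ₗ[F] B, ∀ x y, e (x * y) = e x * e y := by
  let u : Fin 3 → Fˣ := ![Units.mk0 ε hε, 1, 1]
  let e : A ≃ₗ[F] B := v.repr.trans (w.unitsSMul u).repr.symm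
  have he : ∀ x i, w.repr (e x) i = u i • v.repr x i := fun x i => by
    rw [← inv_smul_eq_iff, ← w.repr_unitsSMul]
    simp [e]
  have he₂ : e (v 2) = w 2 := by simp [e, u, Basis.unitsSMul_apply]
  refine ⟨e, fun x y => ?_⟩
  rw [hv.mul_eq, hw.mul_eq, map_smul, he₂, he, he, he, he]
  simp only [u, Matrix.cons_val_zero, Matrix.cons_val_one, Units.smul_def, Units.val_mk0,
    Units.val_one, hαβ]
  congr 1
  ring

end IsA33Basis

theorem stmt9_general {F A B : Type*} [Field F]
    [NonUnitalRing A] [Module F A] [SMulCommClass F A A] [IsScalarTower F A A]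
    [NonUnitalRing B] [Module F B] [SMulCommClass F B B] [IsScalarTower F B B]
    {α β : F} (hα : α ≠ 0)
    (v : Module.Basis (Fin 3) F A) (w : Module.Basis (Fin 3) F B)
    (hv : IsA33Basis α v) (hw : IsA33Basis β w) :
    (∃ e : A ≃ₗ[F] B, ∀ x y : A, e (x * y) = e x * e y) ↔
      ∃ ε : F, ε ≠ 0 ∧ α = ε ^ 2 * β :=
  ⟨fun ⟨e, he⟩ => hv.exists_eq_sq_mul_of_mulEquiv hα hw e he,
    fun ⟨_, hε, hαβ⟩ => hv.exists_mulEquiv_of_eq_sq_mul hw hε hαβ⟩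

/-- For nonzero `α, β ∈ F`, the algebras `A_{3,3}^α` and `A_{3,3}^β` are isomorphic
if and only if there exists `ε ∈ F`, `ε ≠ 0`, with `α = ε²β`. -/
theorem stmt9 {F A B : Type*} [Field F]
    [NonUnitalRing A] [Module F A] [SMulCommClass F A A] [IsScalarTower F A A]
    [NonUnitalRing B] [Module F B] [SMulCommClass F B B] [IsScalarTower F B B]
    {α β : F} (hα : α ≠ 0) (hβ : β ≠ 0)
    (v : Module.Basis (Fin 3) F A) (w : Module.Basis (Fin 3) F B)
    (hv : IsA33Basis α v) (hw : IsA33Basis β w) :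
    (∃ e : A ≃ₗ[F] B, ∀ x y : A, e (x * y) = e x * e y) ↔
      ∃ ε : F, ε ≠ 0 ∧ α = ε ^ 2 * β :=
  stmt9_general hα v w hv hw
end

section
/- Let F be a field of characteristic different from 2 and for α ∈ F let A_{4,5}^α be the 4-dimensional commutative non-unital associative F-algebra with basis a, b, c, d and nonzero products a² = −αc, ab = ba = d, b² = c. Then for α, β ∈ F, the algebras A_{4,5}^α and A_{4,5}^β are isomorphic if and only if there exists ε ∈ F with ε ≠ 0 and α = ε²β. -/
/-- The multiplication table of `A_{4,5}^α` on a basis `a = v 0`, `b = v 1`, `c = v 2`,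
`d = v 3`: `a² = -αc`, `ab = ba = d`, `b² = c`, all other products of basis elements
zero. -/
def IsA45Basis {F A : Type*} [Field F] [NonUnitalRing A] [Module F A]
    (α : F) (v : Module.Basis (Fin 4) F A) : Prop :=
  v 0 * v 0 = (-α) • v 2 ∧ v 0 * v 1 = v 3 ∧ v 1 * v 0 = v 3 ∧ v 1 * v 1 = v 2 ∧
  v 0 * v 2 = 0 ∧ v 0 * v 3 = 0 ∧ v 1 * v 2 = 0 ∧ v 1 * v 3 = 0 ∧
  v 2 * v 0 = 0 ∧ v 2 * v 1 = 0 ∧ v 2 * v 2 = 0 ∧ v 2 * v 3 = 0 ∧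
  v 3 * v 0 = 0 ∧ v 3 * v 1 = 0 ∧ v 3 * v 2 = 0 ∧ v 3 * v 3 = 0

/-!
Write `x = x₀a + x₁b + x₂c + x₃d`. Products only see `(x₀, x₁)`: the `c`, `d` coordinates of `xy`
are those of `(x₁ + x₀t)(y₁ + y₀t)` in `F[t]/(t² + α)`. Rescaling `a` and `d` by `ε` therefore
turns the table of `A_{4,5}^β` into that of `A_{4,5}^{ε²β}`.

Conversely, an isomorphism onto `A_{4,5}^β` sends `a`, `b` to elements whose classes
`u = q + pt`, `u' = s + rt` in `K = F[t]/(t² + β)` are linearly independent, i.e.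
`y = ps - qr ≠ 0`, and `a² = -αb²` gives `u² = -αu'²`. Then `z = u ū' = x + yt` satisfies
`z² = -α N(u')²`, so `xy = 0` and `x² - βy² = -α N(u')²`. Hence `x = 0` and
`α = (y / N(u'))² β`, where `N(u') = s² + βr² ≠ 0` because `y² = (p² + αr²) N(u')`.
-/

theorem exists_eq_sq_mul_of_sq_eq_neg_mul_sq {F : Type*} [Field F] {α β p q r s : F}
    (h₂ : q * q - β * (p * p) = -α * (s * s - β * (r * r))) (h₃ : p * q = -α * (r * s))
    (hdet : p * s - q * r ≠ 0) : ∃ ε : F, ε ≠ 0 ∧ α = ε ^ 2 * β := by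
  have hnorm : s * s + β * (r * r) ≠ 0 := by
    intro h
    have hsq : (p * s - q * r) ^ 2 = (p * p + α * (r * r)) * (s * s + β * (r * r)) := by
      linear_combination (r * r) * h₂ + (-2 * r * s) * h₃
    exact hdet (pow_eq_zero_iff two_ne_zero |>.mp (by rw [hsq, h, mul_zero]))
  have htrace : q * s + β * p * r = 0 := by
    have h : (q * s + β * p * r) * (p * s - q * r) = 0 := by
      linear_combination (-(r * s)) * h₂ + (s * s - β * (r * r)) * h₃
    exact (mul_eq_zero.mp h).resolve_right hdet
  refine ⟨(p * s - q * r) / (s * s + β * (r * r)), div_ne_zero hdet hnorm, ?_⟩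
  rw [div_pow, div_mul_eq_mul_div, eq_div_iff (pow_ne_zero 2 hnorm)]
  linear_combination (s * s - β * (r * r)) * h₂ + 4 * β * r * s * h₃ -
    (q * s + β * p * r) * htrace

namespace IsA45Basis

variable {F A B : Type*} [Field F]
  [NonUnitalRing A] [Module F A] [IsScalarTower F A A]
  [NonUnitalRing B] [Module F B] [IsScalarTower F B B]
  {α β : F} {v : Module.Basis (Fin 4) F A} {w : Module.Basis (Fin 4) F B}

theorem eq_add_mul (hv : IsA45Basis α v) (x : A) :
    x = v.repr x 0 • v 0 + v.repr x 1 • v 1 + (v.repr x 2 • v 1 + v.repr x 3 • v 0) * v 1 := by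
  conv_lhs => rw [← v.sum_repr x]
  rw [Fin.sum_univ_four, add_mul, smul_mul_assoc, smul_mul_assoc, hv.2.2.2.1, hv.2.1]
  abel

variable [SMulCommClass F B B]

theorem mul_eq (hw : IsA45Basis β w) (x y : B) :
    x * y = (w.repr x 1 * w.repr y 1 - β * (w.repr x 0 * w.repr y 0)) • w 2 +
      (w.repr x 0 * w.repr y 1 + w.repr x 1 * w.repr y 0) • w 3 := by
  obtain ⟨h00, h01, h10, h11, h02, h03, h12, h13, h20, h21, h22, h23, h30, h31, h32, h33⟩ := hw
  conv_lhs => rw [← w.sum_repr x, ← w.sum_repr y]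
  simp only [Fin.sum_univ_four, add_mul, mul_add, smul_mul_assoc, mul_smul_comm,
    h00, h01, h10, h11, h02, h03, h12, h13, h20, h21, h22, h23, h30, h31, h32, h33,
    smul_zero, add_zero]
  module

theorem repr_mul_apply (hw : IsA45Basis β w) (x y : B) (i : Fin 4) :
    w.repr (x * y) i = ![0, 0, w.repr x 1 * w.repr y 1 - β * (w.repr x 0 * w.repr y 0),
      w.repr x 0 * w.repr y 1 + w.repr x 1 * w.repr y 0] i := by
  rw [hw.mul_eq]
  fin_cases i <;> simp

theorem repr_map_of_lt_two (hv : IsA45Basis α v) (hw : IsA45Basis β w) {f : A →ₗ[F] B}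
    (hf : ∀ x y, f (x * y) = f x * f y) (x : A) {i : Fin 4} (hi : i < 2) :
    w.repr (f x) i = v.repr x 0 * w.repr (f (v 0)) i + v.repr x 1 * w.repr (f (v 1)) i := by
  have hmul : ∀ y z : B, w.repr (y * z) i = 0 := fun y z => by
    rw [hw.repr_mul_apply]
    fin_cases i <;> simp_all
  conv_lhs => rw [hv.eq_add_mul x]
  simp [hf, hmul]

theorem det_ne_zero_of_surjective (hv : IsA45Basis α v) (hw : IsA45Basis β w)
    {f : A →ₗ[F] B} (hf : ∀ x y, f (x * y) = f x * f y) (hsurj : Function.Surjective f) :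
    w.repr (f (v 0)) 0 * w.repr (f (v 1)) 1 - w.repr (f (v 0)) 1 * w.repr (f (v 1)) 0 ≠ 0 := by
  obtain ⟨x, hx⟩ := hsurj (w 0)
  obtain ⟨y, hy⟩ := hsurj (w 1)
  have hx₀ := hv.repr_map_of_lt_two hw hf x (i := 0) (by decide)
  have hx₁ := hv.repr_map_of_lt_two hw hf x (i := 1) (by decide)
  have hy₀ := hv.repr_map_of_lt_two hw hf y (i := 0) (by decide)
  have hy₁ := hv.repr_map_of_lt_two hw hf y (i := 1) (by decide)
  simp only [hx, hy, Module.Basis.repr_self, Finsupp.single_apply] at hx₀ hx₁ hy₀ hy₁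
  norm_num at hx₀ hx₁ hy₀ hy₁
  -- the coordinates of the preimages of `w 0`, `w 1` invert the matrix `!![p, r; q, s]`
  set p := w.repr (f (v 0)) 0
  set q := w.repr (f (v 0)) 1
  set r := w.repr (f (v 1)) 0
  set s := w.repr (f (v 1)) 1
  refine left_ne_zero_of_mul_eq_one (b := v.repr x 0 * v.repr y 1 - v.repr x 1 * v.repr y 0) ?_
  linear_combination -(v.repr x 0 * p + v.repr x 1 * r) * hy₁ - hx₀ +
    (v.repr x 0 * q + v.repr x 1 * s) * hy₀

theorem exists_eq_sq_mul_of_surjective (hchar : (2 : F) ≠ 0) (hv : IsA45Basis α v)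
    (hw : IsA45Basis β w) {f : A →ₗ[F] B} (hf : ∀ x y, f (x * y) = f x * f y)
    (hsurj : Function.Surjective f) : ∃ ε : F, ε ≠ 0 ∧ α = ε ^ 2 * β := by
  have hsq : f (v 0) * f (v 0) = (-α) • (f (v 1) * f (v 1)) := by
    rw [← hf, ← hf, hv.1, hv.2.2.2.1, map_smul]
  have h₂ := congrArg (w.repr · 2) hsq
  have h₃ := congrArg (w.repr · 3) hsq
  simp only [hw.repr_mul_apply, Fin.isValue, Nat.succ_eq_add_one, Nat.reduceAdd,
    Matrix.cons_val, neg_smul, map_neg, map_smul, Finsupp.coe_neg, Finsupp.coe_smul,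
    Pi.neg_apply, Pi.smul_apply, smul_eq_mul] at h₂ h₃
  refine exists_eq_sq_mul_of_sq_eq_neg_mul_sq (by linear_combination h₂)
    (mul_left_cancel₀ hchar (by linear_combination h₃)) (hv.det_ne_zero_of_surjective hw hf hsurj)

theorem unitsSMul (hw : IsA45Basis β w) (ε : Fˣ) :
    IsA45Basis ((ε : F) ^ 2 * β) (w.unitsSMul ![ε, 1, 1, ε]) := by
  obtain ⟨h00, h01, h10, h11, h02, h03, h12, h13, h20, h21, h22, h23, h30, h31, h32, h33⟩ := hw
  simp only [IsA45Basis, Module.Basis.unitsSMul_apply, Units.smul_def, smul_mul_assoc,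
    mul_smul_comm, smul_smul, h00, h01, h10, h11, h02, h03, h12, h13, h20, h21, h22, h23,
    h30, h31, h32, h33]
  simp [pow_two, mul_assoc]

variable [SMulCommClass F A A]

theorem map_mul_equiv (hv : IsA45Basis α v) (hw : IsA45Basis α w) (x y : A) :
    v.equiv w (Equiv.refl _) (x * y) =
      v.equiv w (Equiv.refl _) x * v.equiv w (Equiv.refl _) y := by
  have hrepr : ∀ z, w.repr (v.equiv w (Equiv.refl _) z) = v.repr z := by
    simp [Module.Basis.equiv]
  rw [hv.mul_eq, hw.mul_eq, hrepr, hrepr]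
  simp

end IsA45Basis

/-- Over a field of characteristic `≠ 2`, the algebras `A_{4,5}^α` and `A_{4,5}^β` are
isomorphic if and only if there exists `ε ∈ F`, `ε ≠ 0`, with `α = ε²β`. -/
theorem stmt14 {F A B : Type*} [Field F] (hchar : (2 : F) ≠ 0)
    [NonUnitalRing A] [Module F A] [SMulCommClass F A A] [IsScalarTower F A A]
    [NonUnitalRing B] [Module F B] [SMulCommClass F B B] [IsScalarTower F B B]
    (α β : F)
    (v : Module.Basis (Fin 4) F A) (w : Module.Basis (Fin 4) F B)
    (hv : IsA45Basis α v) (hw : IsA45Basis β w) :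
    (∃ e : A ≃ₗ[F] B, ∀ x y : A, e (x * y) = e x * e y) ↔
      ∃ ε : F, ε ≠ 0 ∧ α = ε ^ 2 * β := by
  constructor
  · rintro ⟨e, he⟩
    exact hv.exists_eq_sq_mul_of_surjective hchar hw he e.surjective
  · rintro ⟨ε, hε, rfl⟩
    have hw' := hw.unitsSMul (Units.mk0 ε hε)
    rw [Units.val_mk0] at hw'
    exact ⟨v.equiv _ (Equiv.refl _), hv.map_mul_equiv hw'⟩
end
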